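/- arXiv:1109.0451 — 2 statements merged into one kernel-verified Lean document; each statement's English description precedes it below -/
import Mathlib

section
/- If N is a positive integer divisible by 7 but not by 9, and n is an integer with n ≡ 0, 1, 2, 5, or 6 (mod 7), then there exist integers u, v with n ≡ u³ + v³ (mod N) — equivalently, for N with 7 | N the solvability of n ≡ u³ + v³ (mod 7) is necessary for solvability mod N. -/
/-!
By the Chinese remainder theorem it suffices to treat prime powers `p ^ k`. For `p = 3` only
`k ≤ 1` occurs, and every residue mod 3 is a cube. For `p ≠ 3`, a solution of `x³ + y³ = n`
mod `p` with `x ≢ 0` lifts to `ℤ_[p]` by Hensel's lemma, since the derivative `3x²` is a unit.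
Mod 7 such a solution exists exactly for the residues allowed. In any other finite field `𝔽_q`
(`q ≠ 4, 7`) every element is a sum of two cubes: if `3 ∤ q - 1` cubing is bijective; otherwise
take a cubic character `χ`, so that `N = 1 + χ + χ⁻¹` counts the cube roots of nonzero elements.
If `n ≠ 0` were not a sum of two cubes, the sum `∑ₐ N(a) N(n - a)` would vanish; expanding it in
Jacobi sums gives `q - 2 + χ(n)² J + χ(n) J̄ = 0` with `|J| = √q`, which forces `q ≤ 7`.
-/

open Finset ComplexConjugate

def IsSumOfTwoCubes {R : Type*} [Semiring R] (x : R) : Prop := ∃ a b : R, a ^ 3 + b ^ 3 = x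

namespace IsSumOfTwoCubes

variable {R S : Type*} [CommRing R] [CommRing S] {x : R}

lemma map (f : R →+* S) (h : IsSumOfTwoCubes x) : IsSumOfTwoCubes (f x) := by
  obtain ⟨a, b, rfl⟩ := h
  exact ⟨f a, f b, by simp⟩

lemma prod {y : S} (hx : IsSumOfTwoCubes x) (hy : IsSumOfTwoCubes y) :
    IsSumOfTwoCubes (x, y) := by
  obtain ⟨a, b, rfl⟩ := hx
  obtain ⟨c, d, rfl⟩ := hy
  exact ⟨(a, c), (b, d), by ext <;> simp⟩

lemma exists_ne_zero [Nontrivial R] (h : IsSumOfTwoCubes x) :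
    ∃ a b : R, a ≠ 0 ∧ a ^ 3 + b ^ 3 = x := by
  obtain ⟨a, b, rfl⟩ := h
  by_cases ha : a = 0
  · by_cases hb : b = 0
    · exact ⟨1, -1, one_ne_zero, by rw [ha, hb]; ring⟩
    · exact ⟨b, a, hb, add_comm _ _⟩
  · exact ⟨a, b, ha, rfl⟩

end IsSumOfTwoCubes

lemma MulChar.exists_pow_orderOf_eq {R R' : Type*} [CommMonoid R] [CommMonoidWithZero R']
    [IsCyclic Rˣ] [Finite Rˣ] {χ : MulChar R R'} {a : Rˣ} (ha : χ a = 1) :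
    ∃ b : Rˣ, b ^ orderOf χ = a := by
  obtain ⟨g, hg⟩ := IsCyclic.exists_generator (α := Rˣ)
  obtain ⟨k, rfl⟩ : ∃ k : ℕ, g ^ k = a := mem_powers_iff_mem_zpowers.mpr (hg a)
  have hχk : χ ^ k = 1 := by
    rw [MulChar.eq_iff hg, MulChar.pow_apply_coe, MulChar.one_apply_coe, ← map_pow,
      ← Units.val_pow_eq_pow_val, ha]
  obtain ⟨m, rfl⟩ := orderOf_dvd_of_pow_eq_one hχk
  exact ⟨g ^ m, by rw [← pow_mul, mul_comm]⟩

section JacobiSum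

variable {F : Type*} [Field F] [Fintype F]

lemma sum_apply_mul_apply_sub {R : Type*} [CommRing R] (φ ψ : MulChar F R) {n : F} (hn : n ≠ 0) :
    ∑ a, φ a * ψ (n - a) = φ n * ψ n * jacobiSum φ ψ := by
  rw [jacobiSum, mul_sum, ← Equiv.sum_comp (Equiv.mulLeft₀ n hn)]
  refine sum_congr rfl fun t _ => ?_
  rw [Equiv.mulLeft₀_apply, show n - n * t = n * (1 - t) by ring, map_mul, map_mul]
  ring

lemma jacobiSum_inv_inv (χ ψ : MulChar F ℂ) : jacobiSum χ⁻¹ ψ⁻¹ = conj (jacobiSum χ ψ) := by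
  rw [← MulChar.star_eq_inv, ← MulChar.star_eq_inv, ← jacobiSum_ringHomComp]
  rfl

lemma norm_jacobiSum_sq {χ ψ : MulChar F ℂ} (hχ : χ ≠ 1) (hψ : ψ ≠ 1) (hχψ : χ * ψ ≠ 1) :
    ‖jacobiSum χ ψ‖ ^ 2 = Fintype.card F := by
  have hchar : ringChar ℂ ≠ ringChar F := by
    rw [ringChar.eq_zero]
    exact (CharP.char_ne_zero_of_finite F (ringChar F)).symm
  have h := jacobiSum_mul_jacobiSum_inv hchar hχ hψ hχψ
  rw [jacobiSum_inv_inv, Complex.mul_conj, ← Complex.sq_norm] at h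
  exact_mod_cast h

end JacobiSum

section CubicCharacter

variable {F : Type*} [Field F] [Fintype F] {χ : MulChar F ℂ}

lemma MulChar.apply_pow_orderOf {R : Type*} [CommRing R] (χ : MulChar F R) {a : F} (ha : a ≠ 0) :
    χ a ^ orderOf χ = 1 := by
  rw [← MulChar.pow_apply' χ χ.orderOf_pos.ne', pow_orderOf_eq_one, MulChar.one_apply ha.isUnit]

lemma exists_pow_three_eq_of_apply_eq_one (hχ : orderOf χ = 3) {a : F} (ha : a ≠ 0)
    (h : χ a = 1) : ∃ t : F, t ^ 3 = a := by
  obtain ⟨b, hb⟩ := MulChar.exists_pow_orderOf_eq (a := Units.mk0 a ha) h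
  exact ⟨b, by rw [← hχ, ← Units.val_pow_eq_pow_val, hb, Units.val_mk0]⟩

lemma exists_pow_three_eq_of_sum_ne_zero (hχ : orderOf χ = 3) {a : F}
    (h : (1 : MulChar F ℂ) a + χ a + χ⁻¹ a ≠ 0) : ∃ t : F, t ^ 3 = a := by
  have ha : a ≠ 0 := by
    rintro rfl
    simp [MulChar.map_zero] at h
  refine exists_pow_three_eq_of_apply_eq_one hχ ha ?_
  have h3 : χ a ^ 3 = 1 := hχ ▸ χ.apply_pow_orderOf ha
  have hc : χ a ≠ 0 := by rintro hc; simp [hc] at h3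
  rw [MulChar.one_apply ha.isUnit, MulChar.inv_apply_eq_inv'] at h
  have : (χ a - 1) * (1 + χ a + (χ a)⁻¹) = 0 := by
    field_simp
    linear_combination h3
  exact sub_eq_zero.mp ((mul_eq_zero.mp this).resolve_right h)

lemma MulChar.apply_neg_one_of_orderOf_eq_three (hχ : orderOf χ = 3) : χ (-1) = 1 := by
  have h2 : χ (-1) ^ 2 = 1 := by rw [← map_pow]; simp
  have h3 : χ (-1) ^ 3 = 1 := hχ ▸ χ.apply_pow_orderOf (neg_ne_zero.mpr one_ne_zero)
  linear_combination h3 - χ (-1) * h2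

lemma sum_mul_sum_sub_eq_jacobiSum (hχ : orderOf χ = 3) {n : F} (hn : n ≠ 0) (hχn : χ n ≠ 1) :
    ∑ a, ((1 : MulChar F ℂ) a + χ a + χ⁻¹ a) * ((1 : MulChar F ℂ) (n - a) + χ (n - a) + χ⁻¹ (n - a))
      = (Fintype.card F - 2 : ℂ) + χ n ^ 2 * jacobiSum χ χ + χ n * conj (jacobiSum χ χ) := by
  have hχ1 : χ ≠ 1 := by rintro rfl; simp at hχ
  have hχ1' : χ⁻¹ ≠ 1 := inv_ne_one.mpr hχ1
  simp only [add_mul, mul_add, sum_add_distrib, sum_apply_mul_apply_sub _ _ hn]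
  rw [jacobiSum_one_one, jacobiSum_one_nontrivial hχ1, jacobiSum_one_nontrivial hχ1',
    jacobiSum_comm χ 1, jacobiSum_comm χ⁻¹ 1, jacobiSum_one_nontrivial hχ1,
    jacobiSum_one_nontrivial hχ1', jacobiSum_nontrivial_inv hχ1, jacobiSum_comm χ⁻¹ χ,
    jacobiSum_nontrivial_inv hχ1, jacobiSum_inv_inv, MulChar.apply_neg_one_of_orderOf_eq_three hχ,
    MulChar.one_apply hn.isUnit, MulChar.inv_apply_eq_inv']
  have h3 : χ n ^ 3 = 1 := hχ ▸ χ.apply_pow_orderOf hn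
  have hsum : 1 + χ n + χ n ^ 2 = 0 := by
    have : (χ n - 1) * (1 + χ n + χ n ^ 2) = 0 := by linear_combination h3
    exact (mul_eq_zero.mp this).resolve_left (sub_ne_zero.mpr hχn)
  have hinv : (χ n)⁻¹ = χ n ^ 2 := inv_eq_of_mul_eq_one_right (by linear_combination h3)
  rw [hinv]
  linear_combination (-2) * hsum + (χ n * conj (jacobiSum χ χ) - 2) * h3

end CubicCharacter

lemma Complex.natCast_sub_two_add_ne_zero {q : ℕ} (hq : 8 ≤ q) {z c : ℂ} (hz : ‖z‖ ^ 2 = q)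
    (hc : ‖c‖ = 1) : (q - 2 : ℂ) + c ^ 2 * z + c * conj z ≠ 0 := by
  intro h
  have h' : (q - 2 : ℂ) = -(c ^ 2 * z + c * conj z) := by linear_combination h
  have hq' : (8 : ℝ) ≤ q := by exact_mod_cast hq
  have hbound : (q : ℝ) - 2 ≤ 2 * ‖z‖ :=
    calc (q : ℝ) - 2 = ‖(q - 2 : ℂ)‖ := by
          rw [show (q - 2 : ℂ) = ((q - 2 : ℝ) : ℂ) by push_cast; ring, Complex.norm_real,
            Real.norm_of_nonneg (by linarith)]
      _ = ‖c ^ 2 * z + c * conj z‖ := by rw [h', norm_neg]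
      _ ≤ ‖c ^ 2 * z‖ + ‖c * conj z‖ := norm_add_le _ _
      _ = 2 * ‖z‖ := by simp [hc]; ring
  nlinarith [norm_nonneg z]

namespace FiniteField

variable {F : Type*} [Field F] [Fintype F]

lemma exists_pow_eq_of_coprime {m : ℕ} (hm : m ≠ 0) (h : (Fintype.card F - 1).Coprime m) (a : F) :
    ∃ t : F, t ^ m = a := by
  rcases eq_or_ne a 0 with rfl | ha
  · exact ⟨0, zero_pow hm⟩
  rw [← Nat.card_eq_fintype_card, ← Nat.card_units] at h
  obtain ⟨t, ht⟩ := (powCoprime h).surjective (Units.mk0 a ha)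
  exact ⟨t, by rw [← Units.val_pow_eq_pow_val, ← powCoprime_apply h, ht, Units.val_mk0]⟩

lemma isSumOfTwoCubes_of_three_dvd (h3 : 3 ∣ Fintype.card F - 1) (h8 : 8 ≤ Fintype.card F)
    (n : F) : IsSumOfTwoCubes n := by
  by_contra hn
  have hn0 : n ≠ 0 := by
    rintro rfl
    exact hn ⟨0, 0, by ring⟩
  obtain ⟨χ, hχ⟩ :=
    MulChar.exists_mulChar_orderOf F h3 (Complex.isPrimitiveRoot_exp 3 (by norm_num))
  have hχn : χ n ≠ 1 := fun h => by
    obtain ⟨t, ht⟩ := exists_pow_three_eq_of_apply_eq_one hχ hn0 h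
    exact hn ⟨t, 0, by rw [ht]; ring⟩
  have hvanish : ∑ a, ((1 : MulChar F ℂ) a + χ a + χ⁻¹ a) *
      ((1 : MulChar F ℂ) (n - a) + χ (n - a) + χ⁻¹ (n - a)) = 0 := by
    refine sum_eq_zero fun a _ => by_contra fun h => ?_
    obtain ⟨t, ht⟩ := exists_pow_three_eq_of_sum_ne_zero hχ (left_ne_zero_of_mul h)
    obtain ⟨s, hs⟩ := exists_pow_three_eq_of_sum_ne_zero hχ (right_ne_zero_of_mul h)
    exact hn ⟨t, s, by rw [ht, hs]; ring⟩
  have hχ1 : χ ≠ 1 := by rintro rfl; simp at hχ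
  have hχ2 : χ * χ ≠ 1 := by
    rw [← pow_two]
    intro h
    have := orderOf_dvd_of_pow_eq_one h
    rw [hχ] at this
    norm_num at this
  refine Complex.natCast_sub_two_add_ne_zero h8 (norm_jacobiSum_sq hχ1 hχ1 hχ2)
    (Complex.norm_eq_one_of_pow_eq_one (hχ ▸ χ.apply_pow_orderOf hn0) three_ne_zero) ?_
  rw [← sum_mul_sum_sub_eq_jacobiSum hχ hn0 hχn, hvanish]

theorem isSumOfTwoCubes (h4 : Fintype.card F ≠ 4) (h7 : Fintype.card F ≠ 7) (n : F) :
    IsSumOfTwoCubes n := by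
  by_cases h3 : 3 ∣ Fintype.card F - 1
  · have h2 : 2 ≤ Fintype.card F := Fintype.one_lt_card
    exact isSumOfTwoCubes_of_three_dvd h3 (by omega) n
  · obtain ⟨t, ht⟩ := exists_pow_eq_of_coprime three_ne_zero
      ((Nat.Prime.coprime_iff_not_dvd Nat.prime_three).mpr h3).symm n
    exact ⟨t, 0, by rw [ht]; ring⟩

end FiniteField

namespace PadicInt

variable {p : ℕ} [Fact p.Prime]

lemma exists_pow_eq_of_norm_sub_lt_one {m : ℕ} (hm : p.Coprime m) {a c : ℤ_[p]} (ha : ‖a‖ = 1)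
    (h : ‖a ^ m - c‖ < 1) : ∃ z : ℤ_[p], z ^ m = c := by
  set F : Polynomial ℤ_[p] := Polynomial.X ^ m - Polynomial.C c
  have hderiv : ‖F.derivative.aeval a‖ = 1 := by
    simpa [F, Polynomial.derivative_X_pow, ha] using hm
  have hnorm : ‖F.aeval a‖ < ‖F.derivative.aeval a‖ ^ 2 := by
    rw [hderiv]
    simpa [F] using h
  obtain ⟨z, hz, -⟩ := hensels_lemma hnorm
  exact ⟨z, sub_eq_zero.mp (by simpa [F] using hz)⟩

lemma isSumOfTwoCubes_intCast (hp3 : p ≠ 3) {n : ℤ} {x y : ZMod p} (hx : x ≠ 0)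
    (h : x ^ 3 + y ^ 3 = n) : IsSumOfTwoCubes (n : ℤ_[p]) := by
  obtain ⟨x, rfl⟩ := ZMod.intCast_surjective x
  obtain ⟨y, rfl⟩ := ZMod.intCast_surjective y
  have hx' : ‖(x : ℤ_[p])‖ = 1 := by
    refine le_antisymm (norm_le_one _) (not_lt.mp fun hlt => hx ?_)
    exact (ZMod.intCast_zmod_eq_zero_iff_dvd x p).mpr ((norm_int_lt_one_iff_dvd x).mp hlt)
  have hdvd : (p : ℤ) ∣ x ^ 3 + y ^ 3 - n :=
    (ZMod.intCast_zmod_eq_zero_iff_dvd _ p).mp (by push_cast; rw [h, sub_self])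
  have hclose : ‖(x : ℤ_[p]) ^ 3 - (n - y ^ 3)‖ < 1 := by
    rw [← norm_int_lt_one_iff_dvd] at hdvd
    convert hdvd using 2
    push_cast
    ring
  obtain ⟨z, hz⟩ := exists_pow_eq_of_norm_sub_lt_one
    ((Nat.coprime_primes Fact.out Nat.prime_three).mpr hp3) hx' hclose
  exact ⟨z, y, by rw [hz]; ring⟩

end PadicInt

namespace ZMod

lemma isSumOfTwoCubes_intCast_mul {a b : ℕ} (hab : a.Coprime b) {n : ℤ}
    (ha : IsSumOfTwoCubes (n : ZMod a)) (hb : IsSumOfTwoCubes (n : ZMod b)) :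
    IsSumOfTwoCubes (n : ZMod (a * b)) := by
  have h := (ha.prod hb).map (chineseRemainder hab).symm.toRingHom
  rwa [show ((n : ZMod a), (n : ZMod b)) = (n : ZMod a × ZMod b) from rfl, map_intCast] at h

lemma exists_cubes_add_eq_of_mod_seven {n : ℤ}
    (hn : n % 7 = 0 ∨ n % 7 = 1 ∨ n % 7 = 2 ∨ n % 7 = 5 ∨ n % 7 = 6) :
    ∃ x y : ZMod 7, x ≠ 0 ∧ x ^ 3 + y ^ 3 = n := by
  rw [← ZMod.intCast_mod n 7, Nat.cast_ofNat]
  rcases hn with h | h | h | h | h <;> rw [h] <;> decide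

lemma isSumOfTwoCubes_intCast_prime_pow {p k : ℕ} (hp : p.Prime) (h9 : ¬ 9 ∣ p ^ k) {n : ℤ}
    (hn : n % 7 = 0 ∨ n % 7 = 1 ∨ n % 7 = 2 ∨ n % 7 = 5 ∨ n % 7 = 6) :
    IsSumOfTwoCubes (n : ZMod (p ^ k)) := by
  have : Fact p.Prime := ⟨hp⟩
  by_cases hp3 : p = 3
  · subst hp3
    obtain rfl | rfl : k = 0 ∨ k = 1 := by
      by_contra hk
      exact h9 ((by norm_num : 9 ∣ 3 ^ 2).trans (pow_dvd_pow 3 (by omega)))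
    · rw [pow_zero]
      exact ⟨0, 0, Subsingleton.elim _ _⟩
    · rw [pow_one]
      exact FiniteField.isSumOfTwoCubes (by simp) (by simp) _
  obtain ⟨x, y, hx, h⟩ : ∃ x y : ZMod p, x ≠ 0 ∧ x ^ 3 + y ^ 3 = n := by
    by_cases hp7 : p = 7
    · subst hp7
      exact exists_cubes_add_eq_of_mod_seven hn
    · refine (FiniteField.isSumOfTwoCubes ?_ (by rwa [ZMod.card]) _).exists_ne_zero
      rw [ZMod.card]
      rintro rfl
      norm_num at hp
  simpa using (PadicInt.isSumOfTwoCubes_intCast hp3 hx h).map (PadicInt.toZModPow k)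

lemma isSumOfTwoCubes_intCast {n : ℤ}
    (hn : n % 7 = 0 ∨ n % 7 = 1 ∨ n % 7 = 2 ∨ n % 7 = 5 ∨ n % 7 = 6) {m : ℕ} (h9 : ¬ 9 ∣ m) :
    IsSumOfTwoCubes (n : ZMod m) := by
  induction m using Nat.recOnPosPrimePosCoprime with
  | prime_pow p k hp _ => exact isSumOfTwoCubes_intCast_prime_pow hp h9 hn
  | zero => exact absurd (dvd_zero 9) h9
  | one => exact ⟨0, 0, Subsingleton.elim _ _⟩
  | coprime a b _ _ hab iha ihb =>
    exact isSumOfTwoCubes_intCast_mul hab (iha fun h => h9 (h.mul_right b))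
      (ihb fun h => h9 (h.mul_left a))

end ZMod

theorem stmt_5_general (N : ℕ) (h9 : ¬ 9 ∣ N) (n : ℤ)
    (hn : n % 7 = 0 ∨ n % 7 = 1 ∨ n % 7 = 2 ∨ n % 7 = 5 ∨ n % 7 = 6) :
    ∃ u v : ℤ, n ≡ u ^ 3 + v ^ 3 [ZMOD N] := by
  obtain ⟨a, b, hab⟩ := ZMod.isSumOfTwoCubes_intCast hn h9
  obtain ⟨u, rfl⟩ := ZMod.intCast_surjective a
  obtain ⟨v, rfl⟩ := ZMod.intCast_surjective b
  refine ⟨u, v, (ZMod.intCast_eq_intCast_iff _ _ _).mp ?_⟩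
  push_cast
  exact hab.symm

theorem stmt_5 (N : ℕ) (hN : 0 < N) (h7 : 7 ∣ N) (h9 : ¬ 9 ∣ N) (n : ℤ)
    (hn : n % 7 = 0 ∨ n % 7 = 1 ∨ n % 7 = 2 ∨ n % 7 = 5 ∨ n % 7 = 6) :
    ∃ u v : ℤ, n ≡ u ^ 3 + v ^ 3 [ZMOD N] :=
  stmt_5_general N h9 n hn
end

section
/- Let M, N ≥ 1 be coprime integers, and let X be an integer with M | X and N | X − 1. Suppose m ≡ u³ + v³ (mod M) and n ≡ x³ + y³ (mod N). Define X* = X·n − (X−1)·m, A = X·x − (X−1)·u, and B = X·y − (X−1)·v. Then X* ≡ A³ + B³ (mod M·N). -/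
theorem stmt_9 (M N : ℤ) (hM : 1 ≤ M) (hN : 1 ≤ N) (hMN : IsCoprime M N)
    (X m n u v x y : ℤ) (hXM : M ∣ X) (hXN : N ∣ X - 1)
    (hm : m ≡ u ^ 3 + v ^ 3 [ZMOD M]) (hn : n ≡ x ^ 3 + y ^ 3 [ZMOD N]) :
    X * n - (X - 1) * m ≡
      (X * x - (X - 1) * u) ^ 3 + (X * y - (X - 1) * v) ^ 3 [ZMOD M * N] := by
  rw [← Int.modEq_and_modEq_iff_modEq_mul (Int.isCoprime_iff_gcd_eq_one.mp hMN)]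
  constructor
  · have h0 : X ≡ 0 [ZMOD M] := Int.modEq_zero_iff_dvd.2 hXM
    have hL : X * n - (X - 1) * m ≡ m [ZMOD M] := by
      have := (h0.mul_right n).sub ((h0.sub_right 1).mul_right m)
      simpa using this
    have hA : X * x - (X - 1) * u ≡ u [ZMOD M] := by
      have := (h0.mul_right x).sub ((h0.sub_right 1).mul_right u)
      simpa using this
    have hB : X * y - (X - 1) * v ≡ v [ZMOD M] := by
      have := (h0.mul_right y).sub ((h0.sub_right 1).mul_right v)
      simpa using this
    exact (hL.trans hm).trans ((hA.pow 3).add (hB.pow 3)).symm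
  · have h1 : X ≡ 1 [ZMOD N] := (Int.modEq_iff_dvd.2 (by simpa using hXN)).symm
    have hL : X * n - (X - 1) * m ≡ n [ZMOD N] := by
      have := (h1.mul_right n).sub ((h1.sub_right 1).mul_right m)
      simpa using this
    have hA : X * x - (X - 1) * u ≡ x [ZMOD N] := by
      have := (h1.mul_right x).sub ((h1.sub_right 1).mul_right u)
      simpa using this
    have hB : X * y - (X - 1) * v ≡ y [ZMOD N] := by
      have := (h1.mul_right y).sub ((h1.sub_right 1).mul_right v)
      simpa using this
    exact (hL.trans hn).trans ((hA.pow 3).add (hB.pow 3)).symm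
end
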